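/- arXiv:0710.1248 — 2 statements merged into one kernel-verified Lean document; each statement's English description precedes it below -/
import Mathlib

section
/- Let L₀, …, L_k be the complete family of layers of a finite convex geometry (J, cl) (so J \ (L₀ ∪ ⋯ ∪ L_k) = ∅). Then: (1) L_i ∩ L_j = ∅ whenever i ≠ j; (2) L₀ ∪ ⋯ ∪ L_k = J; (3) for every i < k, L_{i+1} ∪ ⋯ ∪ L_k ⊆ cl (L_i). -/
open Set

/-- Orientation sign of a triple of points in the plane: the sign of the determinant of
the matrix with columns `y - x` and `z - x`. -/
noncomputable def osign (x y z : Fin 2 → ℝ) : ℝ :=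
  Real.sign ((y 0 - x 0) * (z 1 - x 1) - (y 1 - x 1) * (z 0 - x 0))

/-- A planar point set is in general position if no three distinct points are collinear. -/
def GenPos (X : Set (Fin 2 → ℝ)) : Prop :=
  ∀ x ∈ X, ∀ y ∈ X, ∀ z ∈ X, x ≠ y → y ≠ z → x ≠ z →
    ¬ Collinear ℝ ({x, y, z} : Set (Fin 2 → ℝ))

/-- A convex geometry on a finite set `J`: a closure operator satisfying the
anti-exchange axiom. -/
structure ConvexGeometry (J : Type) [Fintype J] where
  cl : Set J → Set J
  extensive : ∀ A : Set J, A ⊆ cl A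
  mono : ∀ A B : Set J, A ⊆ B → cl A ⊆ cl B
  idem : ∀ A : Set J, cl (cl A) = cl A
  antiExchange : ∀ A : Set J, cl A = A → ∀ x y : J, x ≠ y → x ∉ A → y ∉ A →
    x ∈ cl (A ∪ {y}) → y ∉ cl (A ∪ {x})

variable {J : Type} [Fintype J]

/-- A set is dependent if some element lies in the closure of the rest. -/
def ConvexGeometry.Dependent (G : ConvexGeometry J) (D : Set J) : Prop :=
  ∃ x ∈ D, x ∈ G.cl (D \ {x})

/-- A circuit is an inclusion-minimal dependent set. -/
def ConvexGeometry.IsCircuit (G : ConvexGeometry J) (C : Set J) : Prop :=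
  G.Dependent C ∧ ∀ D ⊆ C, G.Dependent D → D = C

/-- A convex 4-geometry: all circuits have exactly 4 elements. -/
def ConvexGeometry.Is4Geometry (G : ConvexGeometry J) : Prop :=
  ∀ C : Set J, G.IsCircuit C → C.ncard = 4

/-- `(T, a)` is a rooted triangle of `G` if `T ∪ {a}` is a circuit with root `a`. -/
def ConvexGeometry.RT (G : ConvexGeometry J) (T : Set J) (a : J) : Prop :=
  a ∉ T ∧ G.IsCircuit (insert a T) ∧ a ∈ G.cl T

/-- A realization of a convex geometry in the plane. -/
def IsRealization (G : ConvexGeometry J) (f : J → (Fin 2 → ℝ)) : Prop :=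
  Function.Injective f ∧ GenPos (Set.range f) ∧
    ∀ Y : Set J, f '' (G.cl Y) = convexHull ℝ (f '' Y) ∩ Set.range f

/-- `G.rest n` is the set `Jₙ` remaining after removing the first `n` layers. -/
def ConvexGeometry.rest (G : ConvexGeometry J) : ℕ → Set J
  | 0 => Set.univ
  | n + 1 => {x ∈ G.rest n | x ∈ G.cl (G.rest n \ {x})}

/-- The `n`-th layer: the extreme points of the restricted geometry on `G.rest n`. -/
def ConvexGeometry.layer (G : ConvexGeometry J) (n : ℕ) : Set J :=
  {x ∈ G.rest n | x ∉ G.cl (G.rest n \ {x})}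

/-!
The layers are the successive differences `Jₙ \ Jₙ₊₁` of the decreasing chain `J₀ ⊇ J₁ ⊇ ⋯`,
so they are pairwise disjoint, and every deeper layer lies in `Jᵢ`. Part (3) is therefore the
Krein–Milman property of convex geometries: every `R ⊆ J` lies in the closure of its extreme
points. Let `N = cl (ext R) ∩ R`, and suppose `N ≠ R`. Among the sets `M` with `N ⊆ M ⊊ R`
and `cl M ∩ R = M` take a maximal one. For `p ∈ R \ M` with `cl (M ∪ {p}) ∩ R` minimal,
anti-exchange shows that `M ∪ {p}` is closed in `R`, so by maximality `M = R \ {p}`; then `p`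
is an extreme point of `R` outside `N`, which is absurd.
-/

namespace ConvexGeometry

variable (G : ConvexGeometry J)

def extremePoints (R : Set J) : Set J :=
  {x ∈ R | x ∉ G.cl (R \ {x})}

lemma cl_subset_cl_of_subset_cl {A B : Set J} (h : A ⊆ G.cl B) : G.cl A ⊆ G.cl B :=
  (G.mono _ _ h).trans (G.idem B).le

lemma cl_cl_union_singleton (A : Set J) (x : J) : G.cl (G.cl A ∪ {x}) = G.cl (A ∪ {x}) :=
  (G.cl_subset_cl_of_subset_cl <| union_subset (G.mono _ _ subset_union_left)
      (subset_union_right.trans (G.extensive _))).antisymm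
    (G.mono _ _ (union_subset_union_left _ (G.extensive A)))

lemma antiExchange_of_cl_inter_eq {R M : Set J} (hM : G.cl M ∩ R = M) {x y : J}
    (hx : x ∈ R \ M) (hy : y ∈ R \ M) (hxy : x ≠ y) (h : x ∈ G.cl (M ∪ {y})) :
    y ∉ G.cl (M ∪ {x}) := by
  have not_mem_cl : ∀ z ∈ R \ M, z ∉ G.cl M := fun z hz hzM => hz.2 (hM ▸ ⟨hzM, hz.1⟩)
  rw [← G.cl_cl_union_singleton] at h ⊢
  exact G.antiExchange _ (G.idem M) x y hxy (not_mem_cl x hx) (not_mem_cl y hy) h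

lemma exists_cl_union_singleton_inter_eq {R M : Set J} (hMR : M ⊆ R) (hM : G.cl M ∩ R = M)
    (hne : M ≠ R) : ∃ p ∈ R \ M, G.cl (M ∪ {p}) ∩ R = M ∪ {p} := by
  obtain ⟨p, hp, hmin⟩ := (R \ M).toFinite.exists_minimalFor (fun p => G.cl (M ∪ {p}) ∩ R)
    (R \ M) (sdiff_nonempty.2 fun h => hne (hMR.antisymm h))
  refine ⟨p, hp, subset_antisymm (fun q hq_cl => ?_) fun x hx => ⟨G.extensive _ hx, ?_⟩⟩
  · by_contra hqp
    have hq : q ∈ R \ M := ⟨hq_cl.2, fun h => hqp (Or.inl h)⟩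
    have hp_not_mem : p ∉ G.cl (M ∪ {q}) :=
      G.antiExchange_of_cl_inter_eq hM hq hp (fun h => hqp (Or.inr h)) hq_cl.1
    have hcl_q : G.cl (M ∪ {q}) ⊆ G.cl (M ∪ {p}) :=
      G.cl_subset_cl_of_subset_cl <| union_subset (subset_union_left.trans (G.extensive _))
        (singleton_subset_iff.2 hq_cl.1)
    exact hp_not_mem
      (hmin hq (inter_subset_inter_left _ hcl_q) ⟨G.extensive _ (Or.inr rfl), hp.1⟩).1
  · exact hx.elim (fun h => hMR h) fun h => h ▸ hp.1

theorem subset_cl_extremePoints (R : Set J) : R ⊆ G.cl (G.extremePoints R) := by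
  set N := G.cl (G.extremePoints R) ∩ R
  suffices hN : N = R from hN.symm.subset.trans inter_subset_left
  by_contra hNR
  have hN_closed : G.cl N ∩ R = N :=
    subset_antisymm (fun x hx => ⟨G.cl_subset_cl_of_subset_cl inter_subset_left hx.1, hx.2⟩)
      fun x hx => ⟨G.extensive _ hx, hx.2⟩
  obtain ⟨M, hNM, ⟨hMR, hM, hMne⟩, hmax⟩ := Finite.exists_le_maximal
    (p := fun M => M ⊆ R ∧ G.cl M ∩ R = M ∧ M ≠ R) ⟨inter_subset_right, hN_closed, hNR⟩
  obtain ⟨p, hp, hMp⟩ := G.exists_cl_union_singleton_inter_eq hMR hM hMne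
  have hMp_eq : M ∪ {p} = R := by
    by_contra h
    exact hp.2 (hmax ⟨union_subset hMR (singleton_subset_iff.2 hp.1), hMp, h⟩
      subset_union_left (Or.inr rfl))
  have hp_extreme : p ∈ G.extremePoints R := by
    refine ⟨hp.1, fun hpcl => hp.2 (hM ▸ ⟨G.mono _ _ ?_ hpcl, hp.1⟩)⟩
    rw [← hMp_eq, union_sdiff_right]
    exact sdiff_subset
  exact hp.2 (hNM ⟨G.extensive _ hp_extreme, hp.1⟩)

lemma rest_antitone : Antitone G.rest :=
  antitone_nat_of_succ_le fun _ _ hx => hx.1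

lemma rest_subset_cl_layer (n : ℕ) : G.rest n ⊆ G.cl (G.layer n) :=
  G.subset_cl_extremePoints (G.rest n)

lemma pairwise_disjoint_layer : Pairwise (Function.onFun Disjoint G.layer) :=
  (pairwise_disjoint_on _).2 fun _ _ hij =>
    disjoint_left.2 fun _ hxi hxj => hxi.2 (G.rest_antitone (Nat.succ_le_of_lt hij) hxj.1).2

lemma layer_subset_cl_layer {i j : ℕ} (hij : i ≤ j) : G.layer j ⊆ G.cl (G.layer i) :=
  fun _ hx => G.rest_subset_cl_layer i (G.rest_antitone hij hx.1)

end ConvexGeometry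

/-- Properties of the complete family of layers `L₀, …, L_k` of a finite
convex geometry: the layers are pairwise disjoint, their union is `J`, and all deeper
layers lie in the closure of any earlier layer. -/
theorem layer_properties (G : ConvexGeometry J) (k : ℕ)
    (hcomplete : Set.univ \ (⋃ i ∈ Finset.Iic k, G.layer i) = ∅) :
    (∀ i j : ℕ, i ≠ j → G.layer i ∩ G.layer j = ∅) ∧
    (⋃ i ∈ Finset.Iic k, G.layer i) = Set.univ ∧
    (∀ i : ℕ, i < k → (⋃ j ∈ Finset.Icc (i + 1) k, G.layer j) ⊆ G.cl (G.layer i)) :=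
  ⟨fun _ _ hij => disjoint_iff_inter_eq_empty.mp (G.pairwise_disjoint_layer hij),
    univ_subset_iff.mp (sdiff_eq_empty.mp hcomplete),
    fun _ _ => iUnion₂_subset fun _ hj =>
      G.layer_subset_cl_layer (Nat.le_of_succ_le (Finset.mem_Icc.mp hj).1)⟩
end

section
/- Let a, b, c, x, y be five distinct points of ℝ² no three of which are collinear, with x ∈ convexHull ℝ {a,b,c} and y ∈ convexHull ℝ {a,b,c}. Then exactly one of the following three alternatives holds: x ∈ convexHull ℝ {a,b,y}, x ∈ convexHull ℝ {a,c,y}, x ∈ convexHull ℝ {b,c,y}. -/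
open Set

variable {J : Type} [Fintype J]

/-! Inside a positively oriented triangle `pqr`, a point lies in the hull iff its three
barycentric minors are nonnegative. Orient `abc` positively; since `y` is interior, `aby`, `cay`,
`bcy` are positively oriented, and with `s_p = orientDet y p x` the hull conditions become
`s_a ≥ 0 ≥ s_b`, `s_c ≥ 0 ≥ s_a`, `s_b ≥ 0 ≥ s_c`. The barycentric coordinates of `y` are
positive and give `Σ_p w_p s_p = 0`, so the nonzero numbers `s_a, s_b, s_c` do not all have the
same sign, and exactly one of the three cyclic sign changes occurs. -/

def orientDet (p q r : Fin 2 → ℝ) : ℝ :=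
  (q 0 - p 0) * (r 1 - p 1) - (q 1 - p 1) * (r 0 - p 0)

lemma orientDet_swap (p q r : Fin 2 → ℝ) : orientDet q p r = -orientDet p q r := by
  unfold orientDet; ring

lemma collinear_of_orientDet_eq_zero {p q r : Fin 2 → ℝ} (h : orientDet p q r = 0) :
    Collinear ℝ {p, q, r} := by
  rw [collinear_iff_not_affineIndependent_set,
    affineIndependent_iff_linearIndependent_vsub ℝ _ (0 : Fin 3),
    ← linearIndependent_equiv (finSuccAboveEquiv (0 : Fin 3))]
  have hrows : (fun i : {i : Fin 3 // i ≠ 0} => ![p, q, r] i -ᵥ ![p, q, r] 0) ∘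
      finSuccAboveEquiv 0 = (Matrix.of ![q - p, r - p]).row := by
    ext i j; fin_cases i <;> rfl
  rw [hrows, Matrix.linearIndependent_rows_iff_isUnit, Matrix.isUnit_iff_isUnit_det,
    Matrix.det_fin_two, isUnit_iff_ne_zero, not_not]
  simpa [orientDet, mul_comm] using h

lemma GenPos.orientDet_ne_zero {X : Set (Fin 2 → ℝ)} (hX : GenPos X) {p q r : Fin 2 → ℝ}
    (hpq : p ≠ q) (hqr : q ≠ r) (hpr : p ≠ r) (hp : p ∈ X := by simp) (hq : q ∈ X := by simp)
    (hr : r ∈ X := by simp) : orientDet p q r ≠ 0 := fun h =>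
  hX p hp q hq r hr hpq hqr hpr (collinear_of_orientDet_eq_zero h)

lemma convex_setOf_orientDet_nonneg (p q : Fin 2 → ℝ) :
    Convex ℝ {z | 0 ≤ orientDet p q z} := by
  intro z hz w hw s t hs ht hst
  have hlin : orientDet p q (s • z + t • w) = s * orientDet p q z + t * orientDet p q w := by
    simp only [orientDet, Pi.add_apply, Pi.smul_apply, smul_eq_mul]
    linear_combination ((q 0 - p 0) * p 1 - (q 1 - p 1) * p 0) * hst
  simp only [mem_ofPred_eq, hlin] at hz hw ⊢
  positivity

lemma mem_convexHull_triple_iff {p q r z : Fin 2 → ℝ} (hD : 0 < orientDet p q r) :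
    z ∈ convexHull ℝ {p, q, r} ↔
      0 ≤ orientDet q r z ∧ 0 ≤ orientDet r p z ∧ 0 ≤ orientDet p q z := by
  constructor
  · refine fun hz => convexHull_min ?_ ((convex_setOf_orientDet_nonneg q r).inter
      ((convex_setOf_orientDet_nonneg r p).inter (convex_setOf_orientDet_nonneg p q))) hz
    rintro _ (rfl | rfl | rfl) <;> refine ⟨?_, ?_, ?_⟩ <;> simp only [mem_ofPred_eq] <;>
      unfold orientDet at * <;> nlinarith
  · rintro ⟨hp, hq, hr⟩
    -- Cramer's rule: `orientDet p q r • z` is the combination of `p, q, r` weighted by the minors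
    have hsum : orientDet q r z + orientDet r p z + orientDet p q z = orientDet p q r := by
      unfold orientDet; ring
    have hz : (Finset.univ : Finset (Fin 3)).centerMass
        ![orientDet q r z, orientDet r p z, orientDet p q z] ![p, q, r] = z := by
      ext i
      fin_cases i <;>
      · simp only [Finset.centerMass, Fin.sum_univ_three, Matrix.cons_val_zero,
          Matrix.cons_val_one, Matrix.cons_val, hsum, Fin.zero_eta, Fin.mk_one, Pi.smul_apply,
          Pi.add_apply, smul_eq_mul]
        field_simp
        unfold orientDet; ring
    rw [← hz]
    refine Finset.centerMass_mem_convexHull _ ?_ ?_ ?_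
    · intro i _; fin_cases i <;> assumption
    · simpa [Fin.sum_univ_three, hsum] using hD
    · intro i _; fin_cases i <;> simp

def ExactlyOneOfThree (P Q R : Prop) : Prop :=
  (P ∧ ¬Q ∧ ¬R) ∨ (¬P ∧ Q ∧ ¬R) ∨ (¬P ∧ ¬Q ∧ R)

lemma ExactlyOneOfThree.swap_right {P Q R : Prop} (h : ExactlyOneOfThree P Q R) :
    ExactlyOneOfThree P R Q := by
  unfold ExactlyOneOfThree at *; tauto

lemma exactlyOneOfThree_of_weighted_sum_eq_zero {u v w s t r : ℝ} (hu : 0 < u) (hv : 0 < v)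
    (hw : 0 < w) (hs : s ≠ 0) (ht : t ≠ 0) (hr : r ≠ 0) (h : u * s + v * t + w * r = 0) :
    ExactlyOneOfThree (t ≤ 0 ∧ 0 ≤ s) (s ≤ 0 ∧ 0 ≤ r) (r ≤ 0 ∧ 0 ≤ t) := by
  have not_pos : ¬(0 < s ∧ 0 < t ∧ 0 < r) := fun ⟨hs, ht, hr⟩ => by
    nlinarith [mul_pos hu hs, mul_pos hv ht, mul_pos hw hr]
  have not_neg : ¬(s < 0 ∧ t < 0 ∧ r < 0) := fun ⟨hs, ht, hr⟩ => by
    nlinarith [mul_pos hu (neg_pos.2 hs), mul_pos hv (neg_pos.2 ht), mul_pos hw (neg_pos.2 hr)]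
  unfold ExactlyOneOfThree
  grind

theorem exactlyOneOfThree_mem_convexHull {a b c x y : Fin 2 → ℝ} (hD : 0 < orientDet a b c)
    (hx : x ∈ convexHull ℝ {a, b, c}) (hy : y ∈ convexHull ℝ {a, b, c})
    (hya : orientDet b c y ≠ 0) (hyb : orientDet c a y ≠ 0) (hyc : orientDet a b y ≠ 0)
    (hxa : orientDet y a x ≠ 0) (hxb : orientDet y b x ≠ 0) (hxc : orientDet y c x ≠ 0) :
    ExactlyOneOfThree (x ∈ convexHull ℝ {a, b, y}) (x ∈ convexHull ℝ {a, c, y})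
      (x ∈ convexHull ℝ {b, c, y}) := by
  obtain ⟨hx₁, hx₂, hx₃⟩ := (mem_convexHull_triple_iff hD).1 hx
  obtain ⟨hy₁, hy₂, hy₃⟩ := (mem_convexHull_triple_iff hD).1 hy
  rw [insert_comm a c, mem_convexHull_triple_iff (hy₃.lt_of_ne' hyc),
    mem_convexHull_triple_iff (hy₂.lt_of_ne' hyb), mem_convexHull_triple_iff (hy₁.lt_of_ne' hya)]
  simp only [orientDet_swap y b, orientDet_swap y a, orientDet_swap y c, neg_nonneg, hx₁, hx₂, hx₃,
    and_true]
  refine exactlyOneOfThree_of_weighted_sum_eq_zero (hy₁.lt_of_ne' hya) (hy₂.lt_of_ne' hyb)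
    (hy₃.lt_of_ne' hyc) hxa hxb hxc ?_
  unfold orientDet; ring

/-- For five distinct planar points `a, b, c, x, y`, no three collinear,
with `x` and `y` inside the triangle `abc`, exactly one of the three alternatives holds:
`x ∈ ch{a,b,y}`, `x ∈ ch{a,c,y}`, `x ∈ ch{b,c,y}` (the 3-carousel rule in the plane). -/
theorem three_carousel_in_plane (a b c x y : Fin 2 → ℝ)
    (hab : a ≠ b) (hac : a ≠ c) (hax : a ≠ x) (hay : a ≠ y)
    (hbc : b ≠ c) (hbx : b ≠ x) (hby : b ≠ y)
    (hcx : c ≠ x) (hcy : c ≠ y) (hxy : x ≠ y)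
    (hgp : ∀ p ∈ ({a, b, c, x, y} : Set (Fin 2 → ℝ)),
      ∀ q ∈ ({a, b, c, x, y} : Set (Fin 2 → ℝ)),
      ∀ r ∈ ({a, b, c, x, y} : Set (Fin 2 → ℝ)),
        p ≠ q → q ≠ r → p ≠ r → ¬ Collinear ℝ ({p, q, r} : Set (Fin 2 → ℝ)))
    (hx : x ∈ convexHull ℝ ({a, b, c} : Set (Fin 2 → ℝ)))
    (hy : y ∈ convexHull ℝ ({a, b, c} : Set (Fin 2 → ℝ))) :
    (x ∈ convexHull ℝ ({a, b, y} : Set (Fin 2 → ℝ)) ∧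
      x ∉ convexHull ℝ ({a, c, y} : Set (Fin 2 → ℝ)) ∧
      x ∉ convexHull ℝ ({b, c, y} : Set (Fin 2 → ℝ))) ∨
    (x ∉ convexHull ℝ ({a, b, y} : Set (Fin 2 → ℝ)) ∧
      x ∈ convexHull ℝ ({a, c, y} : Set (Fin 2 → ℝ)) ∧
      x ∉ convexHull ℝ ({b, c, y} : Set (Fin 2 → ℝ))) ∨
    (x ∉ convexHull ℝ ({a, b, y} : Set (Fin 2 → ℝ)) ∧
      x ∉ convexHull ℝ ({a, c, y} : Set (Fin 2 → ℝ)) ∧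
      x ∈ convexHull ℝ ({b, c, y} : Set (Fin 2 → ℝ))) := by
  wlog hD : 0 < orientDet a b c generalizing a b with H
  · -- exchanging `a` and `b` reverses the orientation and swaps the last two alternatives
    have hD' : 0 < orientDet b a c := by
      rw [orientDet_swap, neg_pos]
      exact (not_lt.1 hD).lt_of_ne (GenPos.orientDet_ne_zero hgp hab hbc hac)
    have h := H b a hab.symm hbc hbx hby hac hax hay (by rwa [insert_comm b a])
      (by rwa [insert_comm b a]) (by rwa [insert_comm b a]) hD'
    rw [insert_comm b a] at h
    exact ExactlyOneOfThree.swap_right h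
  have hgp : GenPos {a, b, c, x, y} := hgp
  exact exactlyOneOfThree_mem_convexHull hD hx hy (hgp.orientDet_ne_zero hbc hcy hby)
    (hgp.orientDet_ne_zero hac.symm hay hcy) (hgp.orientDet_ne_zero hab hby hay)
    (hgp.orientDet_ne_zero hay.symm hax hxy.symm) (hgp.orientDet_ne_zero hby.symm hbx hxy.symm)
    (hgp.orientDet_ne_zero hcy.symm hcx hxy.symm)
end
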